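/- Assume the complex-valued linear system Σ is stabilizable and {P₁,P₂} is the unique positive definite bimatrix solution of the bimatrix Riccati equation. Then the iteration starting from {P₁(0),P₂(0)} = {Q,0} is well defined (for every k the bimatrix {S₁(k),S₂(k)} = {R,0} + {B₁,B₂}^H{P₁(k),P₂(k)}{B₁,B₂} is positive definite, hence invertible), and for every k ≥ 0: {Q,0} ≤ {P₁(k),P₂(k)} ≤ {P₁(k+1),P₂(k+1)} ≤ {P₁,P₂}. -/

import Mathlib

open Matrix Filter Topology
open scoped ENNReal ComplexOrder

noncomputable section

/-- Entrywise complex conjugate of a matrix, `M^#`. -/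
def mconj {k l : Type*} (A : Matrix k l ℂ) : Matrix k l ℂ := A.map (starRingEnd ℂ)

/-- A bimatrix `{A₁, A₂}` of `k × l` complex matrices. -/
structure Bimatrix (k l : ℕ) where
  fst : Matrix (Fin k) (Fin l) ℂ
  snd : Matrix (Fin k) (Fin l) ℂ

namespace Bimatrix

variable {k l p : ℕ}

/-- The action of a bimatrix on a vector: `{A₁,A₂}x = A₁x + A₂^# x^#`. -/
def apply (A : Bimatrix k l) (x : Fin l → ℂ) : Fin k → ℂ :=
  A.fst *ᵥ x + mconj A.snd *ᵥ star x

/-- Bimatrix product `{A₁,A₂}{B₁,B₂} = {A₁B₁ + A₂^#B₂, A₁^#B₂ + A₂B₁}`. -/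
def mul (A : Bimatrix k l) (B : Bimatrix l p) : Bimatrix k p :=
  ⟨A.fst * B.fst + mconj A.snd * B.snd, mconj A.fst * B.snd + A.snd * B.fst⟩

/-- Bimatrix conjugate transpose `{A₁,A₂}^H = {A₁^H, A₂^T}`. -/
def conjT (A : Bimatrix k l) : Bimatrix l k :=
  ⟨A.fst.conjTranspose, A.snd.transpose⟩

def add (A B : Bimatrix k l) : Bimatrix k l := ⟨A.fst + B.fst, A.snd + B.snd⟩

def sub (A B : Bimatrix k l) : Bimatrix k l := ⟨A.fst - B.fst, A.snd - B.snd⟩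

def neg (A : Bimatrix k l) : Bimatrix k l := ⟨-A.fst, -A.snd⟩

/-- The identity bimatrix `{I, 0}`. -/
def one (k : ℕ) : Bimatrix k k := ⟨1, 0⟩

/-- A bimatrix is Hermitian if `P₁^H = P₁` and `P₂^T = P₂`. -/
def IsHermitian (P : Bimatrix k k) : Prop :=
  P.fst.conjTranspose = P.fst ∧ P.snd.transpose = P.snd

/-- The real quadratic form `Re (x^H P₁ x + x^H P₂^# x^#)` of a bimatrix. -/
def quadForm (P : Bimatrix k k) (x : Fin k → ℂ) : ℝ :=
  (star x ⬝ᵥ P.apply x).re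

/-- Positive semidefinite bimatrix. -/
def PosSemidef (P : Bimatrix k k) : Prop :=
  P.IsHermitian ∧ ∀ x : Fin k → ℂ, 0 ≤ P.quadForm x

/-- Positive definite bimatrix. -/
def PosDef (P : Bimatrix k k) : Prop :=
  P.IsHermitian ∧ (∀ x : Fin k → ℂ, 0 ≤ P.quadForm x) ∧
    ∀ x : Fin k → ℂ, x ≠ 0 → 0 < P.quadForm x

/-- The Loewner-type order on bimatrices: `X ≤ Y` iff `Y - X ≥ 0`. -/
def le (X Y : Bimatrix k k) : Prop := PosSemidef (Y.sub X)

/-- `T` is the (two-sided) inverse of the bimatrix `S`. -/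
def IsInv (S T : Bimatrix k k) : Prop := S.mul T = one k ∧ T.mul S = one k

/-- The complex-matrix representation of a bimatrix. -/
def toMat (S : Bimatrix k k) : Matrix (Fin k ⊕ Fin k) (Fin k ⊕ Fin k) ℂ :=
  fromBlocks S.fst (mconj S.snd) S.snd (mconj S.fst)

/-- The inverse of a bimatrix, extracted from the inverse of its complex-matrix
representation.  When `S` is invertible as a bimatrix, `S.inv` is its genuine inverse. -/
def inv (S : Bimatrix k k) : Bimatrix k k :=
  ⟨(toMat S)⁻¹.toBlocks₁₁, (toMat S)⁻¹.toBlocks₂₁⟩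

end Bimatrix

variable {n m : ℕ}

/-- The complex-valued linear system `x(k+1) = {A₁,A₂}x(k) + {B₁,B₂}u(k)` is
stabilizable if some full state feedback `u(k) = K₁x(k) + K₂^#x^#(k)` drives every
closed-loop solution to zero. -/
def Stabilizable (A : Bimatrix n n) (B : Bimatrix n m) : Prop :=
  ∃ K : Bimatrix m n, ∀ x : ℕ → (Fin n → ℂ),
    (∀ k : ℕ, x (k + 1) = A.apply (x k) + B.apply (K.apply (x k))) →
    Tendsto x atTop (𝓝 0)

/-- `{S₁,S₂} = {R,0} + {B₁,B₂}^H {P₁,P₂} {B₁,B₂}`. -/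
def Smat (B : Bimatrix n m) (R : Matrix (Fin m) (Fin m) ℂ) (P : Bimatrix n n) :
    Bimatrix m m :=
  (Bimatrix.mk R 0).add (B.conjT.mul (P.mul B))

/-- The bimatrix Riccati equation
`-{Q,0} = {A}^H{P}{A} - {P} - {A}^H{P}{B}{S}⁻¹{B}^H{P}{A}`, where
`{S} = {R,0} + {B}^H{P}{B}` is required to be invertible. -/
def RiccatiEq (A : Bimatrix n n) (B : Bimatrix n m)
    (Q : Matrix (Fin n) (Fin n) ℂ) (R : Matrix (Fin m) (Fin m) ℂ)
    (P : Bimatrix n n) : Prop :=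
  ∃ T : Bimatrix m m, (Smat B R P).IsInv T ∧
    (Bimatrix.mk Q 0).neg =
      ((A.conjT.mul (P.mul A)).sub P).sub
        (A.conjT.mul (P.mul (B.mul (T.mul (B.conjT.mul (P.mul A))))))

/-- The Riccati iteration `{P(0)} = {Q,0}`,
`{P(k+1)} = {Q,0} + {A}^H{P(k)}{A} - {A}^H{P(k)}{B}{S(k)}⁻¹{B}^H{P(k)}{A}`, where
`{S(k)} = {R,0} + {B}^H{P(k)}{B}`. -/
def riccatiIter (A : Bimatrix n n) (B : Bimatrix n m)
    (Q : Matrix (Fin n) (Fin n) ℂ) (R : Matrix (Fin m) (Fin m) ℂ) : ℕ → Bimatrix n n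
  | 0 => ⟨Q, 0⟩
  | k + 1 =>
    let P := riccatiIter A B Q R k
    ((Bimatrix.mk Q 0).add (A.conjT.mul (P.mul A))).sub
      (A.conjT.mul (P.mul (B.mul ((Smat B R P).inv.mul (B.conjT.mul (P.mul A))))))

/-!
Represent a bimatrix `{A₁, A₂}` by the complex block matrix `[[A₁, A₂^#], [A₂, A₁^#]]`. This is
injective and compatible with sums, products, conjugate transposes and inverses, and a bimatrix is
positive semidefinite iff its representation is: the bimatrix form at `x` is half the ordinary
form at the augmented vector `(x, x^#)`, and every vector is `(x, x^#) + i (w, w^#)` with the cross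
terms cancelling. The bimatrix iteration thus becomes the matrix Riccati iteration
`X ↦ Q + AᴴXA - AᴴXB (R + BᴴXB)⁻¹ BᴴXA`. Completing the square writes this map as
`Q + (A + BK)ᴴX(A + BK) + KᴴRK` at the optimal gain `K` and shows that it dominates the same
expression at any other gain, so it is monotone on positive semidefinite matrices and bounded
below by `Q`. Starting from `Q` the iterates therefore increase and stay below every positive
semidefinite fixed point, in particular below `P`.
-/


open scoped MatrixOrder

theorem MonotoneOn.iterate_le_succ_and_mem_Icc {α : Type*} [Preorder α] {f : α → α} {q p : α}
    (hf : MonotoneOn f (Set.Ici q)) (hq : q ≤ f q) (hp : f.IsFixedPt p) (hqp : q ≤ p) (k : ℕ) :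
    f^[k] q ∈ Set.Icc q p ∧ f^[k] q ≤ f^[k + 1] q := by
  induction k with
  | zero => exact ⟨⟨le_rfl, hqp⟩, hq⟩
  | succ k ih =>
    obtain ⟨⟨hqk, hkp⟩, hk⟩ := ih
    have hqk' : q ≤ f^[k + 1] q := hqk.trans hk
    refine ⟨⟨hqk', ?_⟩, ?_⟩
    · rw [Function.iterate_succ_apply', ← hp.eq]
      exact hf hqk (hqk.trans hkp) hkp
    · rw [Function.iterate_succ_apply', Function.iterate_succ_apply' f (k + 1)]
      exact hf hqk hqk' hk

theorem Matrix.PosDef.add_conjTranspose_mul_mul {𝕜 ι κ : Type*} [RCLike 𝕜] [Fintype ι] [Fintype κ]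
    {R : Matrix κ κ 𝕜} {X : Matrix ι ι 𝕜}
    (hR : R.PosDef) (hX : 0 ≤ X) (B : Matrix ι κ 𝕜) : (R + Bᴴ * X * B).PosDef :=
  hR.add_posSemidef (hX.posSemidef.conjTranspose_mul_mul_same B)

section RiccatiMap

variable {𝕜 ι κ : Type*} [RCLike 𝕜] [Fintype ι] [Fintype κ] [DecidableEq κ]

def riccatiMap (A : Matrix ι ι 𝕜) (B : Matrix ι κ 𝕜) (Q : Matrix ι ι 𝕜) (R : Matrix κ κ 𝕜)
    (X : Matrix ι ι 𝕜) : Matrix ι ι 𝕜 :=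
  Q + Aᴴ * X * A - Aᴴ * X * B * (R + Bᴴ * X * B)⁻¹ * (Bᴴ * X * A)

def riccatiGain (A : Matrix ι ι 𝕜) (B : Matrix ι κ 𝕜) (R : Matrix κ κ 𝕜) (X : Matrix ι ι 𝕜) :
    Matrix κ ι 𝕜 :=
  (R + Bᴴ * X * B)⁻¹ * (Bᴴ * X * A)

def feedbackCost (A : Matrix ι ι 𝕜) (B : Matrix ι κ 𝕜) (Q : Matrix ι ι 𝕜) (R : Matrix κ κ 𝕜)
    (X : Matrix ι ι 𝕜) (K : Matrix κ ι 𝕜) : Matrix ι ι 𝕜 :=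
  Q + (A + B * K)ᴴ * X * (A + B * K) + Kᴴ * R * K

variable (A : Matrix ι ι 𝕜) (B : Matrix ι κ 𝕜) (Q : Matrix ι ι 𝕜) {R : Matrix κ κ 𝕜}
  {X Y : Matrix ι ι 𝕜}

theorem riccatiMap_add_eq_feedbackCost (hX : X.IsHermitian) (hR : R.IsHermitian)
    (hS : IsUnit (R + Bᴴ * X * B)) (K : Matrix κ ι 𝕜) :
    riccatiMap A B Q R X + (K + riccatiGain A B R X)ᴴ * (R + Bᴴ * X * B) * (K + riccatiGain A B R X)
      = feedbackCost A B Q R X K := by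
  simp only [riccatiMap, riccatiGain, feedbackCost]
  set S := R + Bᴴ * X * B with hS_def
  have hSH : Sᴴ = S := by simp [hS_def, Matrix.mul_assoc, hX.eq, hR.eq]
  have hdet := (isUnit_iff_isUnit_det S).mp hS
  have hS_mul_inv (T : Matrix κ ι 𝕜) : S * (S⁻¹ * T) = T := mul_nonsing_inv_cancel_left S T hdet
  have hS_inv_mul (T : Matrix κ ι 𝕜) : S⁻¹ * (S * T) = T := nonsing_inv_mul_cancel_left S T hdet
  have hR_eq : R = S - Bᴴ * X * B := by rw [hS_def]; abel
  rw [hR_eq]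
  simp only [conjTranspose_add, conjTranspose_mul,
    conjTranspose_nonsing_inv, hSH, conjTranspose_conjTranspose, hX.eq, Matrix.add_mul,
    Matrix.mul_add, Matrix.sub_mul, Matrix.mul_sub, Matrix.mul_assoc, hS_mul_inv, hS_inv_mul]
  abel_nf

theorem riccatiMap_le_feedbackCost (hR : R.PosDef) (hX : 0 ≤ X) (K : Matrix κ ι 𝕜) :
    riccatiMap A B Q R X ≤ feedbackCost A B Q R X K := by
  have hS := hR.add_conjTranspose_mul_mul hX B
  rw [← riccatiMap_add_eq_feedbackCost A B Q hX.posSemidef.1 hR.1 hS.isUnit K,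
    le_add_iff_nonneg_right]
  exact (hS.posSemidef.conjTranspose_mul_mul_same _).nonneg

theorem riccatiMap_eq_feedbackCost (hR : R.PosDef) (hX : 0 ≤ X) :
    riccatiMap A B Q R X = feedbackCost A B Q R X (-riccatiGain A B R X) := by
  simpa using riccatiMap_add_eq_feedbackCost A B Q hX.posSemidef.1 hR.1
    (hR.add_conjTranspose_mul_mul hX B).isUnit (-riccatiGain A B R X)

theorem le_riccatiMap (hR : R.PosDef) (hX : 0 ≤ X) :
    Q ≤ riccatiMap A B Q R X := by
  rw [riccatiMap_eq_feedbackCost A B Q hR hX, feedbackCost, add_assoc, le_add_iff_nonneg_right]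
  exact ((hX.posSemidef.conjTranspose_mul_mul_same _).add
    (hR.posSemidef.conjTranspose_mul_mul_same _)).nonneg

theorem riccatiMap_mono (hR : R.PosDef) (hX : 0 ≤ X) (hXY : X ≤ Y) :
    riccatiMap A B Q R X ≤ riccatiMap A B Q R Y := by
  have hY : 0 ≤ Y := hX.trans hXY
  set K := -riccatiGain A B R Y
  calc riccatiMap A B Q R X
      ≤ feedbackCost A B Q R X K := riccatiMap_le_feedbackCost A B Q hR hX K
    _ ≤ feedbackCost A B Q R Y K := by
        unfold feedbackCost
        gcongr
        exact star_left_conjugate_le_conjugate hXY _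
    _ = riccatiMap A B Q R Y := (riccatiMap_eq_feedbackCost A B Q hR hY).symm

end RiccatiMap

theorem mconj_mconj {k l : Type*} (M : Matrix k l ℂ) : mconj (mconj M) = M := by
  ext i j; simp [mconj]

theorem mconj_zero {k l : Type*} : mconj (0 : Matrix k l ℂ) = 0 := by
  ext i j; simp [mconj]

theorem mconj_one {k : Type*} [DecidableEq k] : mconj (1 : Matrix k k ℂ) = 1 :=
  Matrix.map_one _ (map_zero _) (map_one _)

theorem mconj_add {k l : Type*} (M N : Matrix k l ℂ) : mconj (M + N) = mconj M + mconj N :=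
  Matrix.map_add _ (map_add _) M N

theorem mconj_mul {k l p : Type*} [Fintype l] (M : Matrix k l ℂ) (N : Matrix l p ℂ) :
    mconj (M * N) = mconj M * mconj N :=
  Matrix.map_mul

theorem mconj_eq_conjTranspose_transpose {k l : Type*} (M : Matrix k l ℂ) : mconj M = Mᴴᵀ := rfl

theorem mconj_inv {k : Type*} [Fintype k] [DecidableEq k] (M : Matrix k k ℂ) :
    mconj M⁻¹ = (mconj M)⁻¹ := by
  simp only [mconj_eq_conjTranspose_transpose, conjTranspose_nonsing_inv, transpose_nonsing_inv]

theorem star_mulVec_eq_mconj_mulVec {k l : Type*} [Fintype l] (M : Matrix k l ℂ) (v : l → ℂ) :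
    star (M *ᵥ v) = mconj M *ᵥ star v := by
  rw [star_mulVec, ← mulVec_transpose]
  rfl

theorem Matrix.IsHermitian.mconj_eq {k : Type*} {M : Matrix k k ℂ} (h : M.IsHermitian) :
    mconj M = Mᵀ := by
  rw [mconj_eq_conjTranspose_transpose, h.eq]

namespace Bimatrix

variable {k l p : ℕ}

def toMatrix (A : Bimatrix k l) : Matrix (Fin k ⊕ Fin k) (Fin l ⊕ Fin l) ℂ :=
  fromBlocks A.fst (mconj A.snd) A.snd (mconj A.fst)

theorem toMatrix_injective : Function.Injective (toMatrix : Bimatrix k l → _) := by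
  rintro ⟨A₁, A₂⟩ ⟨B₁, B₂⟩ h
  obtain ⟨h₁, -, h₂, -⟩ := fromBlocks_inj.mp h
  exact mk.injEq _ _ _ _ ▸ ⟨h₁, h₂⟩

theorem toMatrix_mul (A : Bimatrix k l) (B : Bimatrix l p) :
    (A.mul B).toMatrix = A.toMatrix * B.toMatrix := by
  simp only [toMatrix, mul, fromBlocks_multiply, mconj_add, mconj_mul, mconj_mconj]
  exact fromBlocks_inj.mpr ⟨rfl, rfl, add_comm _ _, add_comm _ _⟩

theorem toMatrix_add (A B : Bimatrix k l) : (A.add B).toMatrix = A.toMatrix + B.toMatrix := by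
  simp only [toMatrix, add, mconj_add, fromBlocks_add]

theorem toMatrix_sub (A B : Bimatrix k l) : (A.sub B).toMatrix = A.toMatrix - B.toMatrix := by
  ext (i | i) (j | j) <;> simp [toMatrix, sub, mconj]

theorem toMatrix_neg (A : Bimatrix k l) : A.neg.toMatrix = -A.toMatrix := by
  ext (i | i) (j | j) <;> simp [toMatrix, neg, mconj]

theorem toMatrix_one : (one k).toMatrix = 1 := by
  simp only [toMatrix, one, mconj_one, mconj_zero, fromBlocks_one]

theorem toMatrix_conjT (A : Bimatrix k l) : A.conjT.toMatrix = A.toMatrixᴴ := by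
  ext (i | i) (j | j) <;> simp [toMatrix, conjT, mconj]

theorem toMat_eq_toMatrix (S : Bimatrix k k) : S.toMat = S.toMatrix := rfl

/-- Matrices of the form `toMatrix S` are those fixed by entrywise conjugation followed by
swapping the two blocks, and this property is preserved by inversion. -/
theorem toMatrix_inv (S : Bimatrix k k) : S.inv.toMatrix = S.toMatrix⁻¹ := by
  set e := Equiv.sumComm (Fin k) (Fin k)
  have hS : (mconj S.toMatrix).submatrix e e = S.toMatrix := by
    ext (i | i) (j | j) <;> simp [e, toMatrix, mconj]
  have hinv : (mconj S.toMatrix⁻¹).submatrix e e = S.toMatrix⁻¹ := by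
    conv_rhs => rw [← hS]
    rw [inv_submatrix_equiv, mconj_inv]
  rw [inv, toMat_eq_toMatrix]
  ext (i | i) (j | j)
  · rfl
  · exact congrFun (congrFun hinv (.inl i)) (.inr j)
  · rfl
  · exact congrFun (congrFun hinv (.inr i)) (.inr j)

theorem isInv_inv_of_isUnit {S : Bimatrix k k} (h : IsUnit S.toMatrix) : S.IsInv S.inv := by
  have hdet := (isUnit_iff_isUnit_det _).mp h
  constructor <;> apply toMatrix_injective <;>
    rw [toMatrix_mul, toMatrix_inv, toMatrix_one]
  exacts [mul_nonsing_inv _ hdet, nonsing_inv_mul _ hdet]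

theorem IsInv.toMatrix_eq {S T : Bimatrix k k} (h : S.IsInv T) :
    T.toMatrix = S.toMatrix⁻¹ := by
  refine (inv_eq_left_inv ?_).symm
  rw [← toMatrix_mul, h.2, toMatrix_one]

theorem isHermitian_iff_conjT_eq (P : Bimatrix k k) : P.IsHermitian ↔ P.conjT = P := by
  rcases P with ⟨P₁, P₂⟩
  simp [IsHermitian, conjT]

theorem isHermitian_iff_toMatrix (P : Bimatrix k k) :
    P.IsHermitian ↔ P.toMatrix.IsHermitian := by
  rw [isHermitian_iff_conjT_eq, Matrix.IsHermitian, ← toMatrix_conjT, toMatrix_injective.eq_iff]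

def augment (x : Fin k → ℂ) : Fin k ⊕ Fin k → ℂ := Sum.elim x (star x)

theorem toMatrix_mulVec_augment (P : Bimatrix k k) (x : Fin k → ℂ) :
    P.toMatrix *ᵥ augment x = augment (P.apply x) := by
  simp only [toMatrix, augment, fromBlocks_mulVec, Sum.elim_comp_inl, Sum.elim_comp_inr, apply,
    star_add, star_mulVec_eq_mconj_mulVec, mconj_mconj, star_star, add_comm (P.snd *ᵥ x)]

theorem augment_dotProduct_toMatrix_mulVec (P : Bimatrix k k) (x y : Fin k → ℂ) :
    star (augment x) ⬝ᵥ (P.toMatrix *ᵥ augment y) = ((2 * (star x ⬝ᵥ P.apply y).re : ℝ) : ℂ) := by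
  have hstar : star (augment x) = augment (star x) := by
    ext (i | i) <;> rfl
  rw [toMatrix_mulVec_augment, hstar, augment, augment, dotProduct_block]
  simp only [Sum.elim_comp_inl, Sum.elim_comp_inr, star_star]
  rw [dotProduct_star, dotProduct_comm (P.apply y)]
  exact Complex.add_conj _

theorem PosDef.posSemidef {P : Bimatrix k k} (h : P.PosDef) : P.PosSemidef := ⟨h.1, h.2.1⟩

theorem posSemidef_of_toMatrix {P : Bimatrix k k} (h : P.toMatrix.PosSemidef) : P.PosSemidef := by
  refine ⟨(isHermitian_iff_toMatrix P).mpr h.1, fun x => ?_⟩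
  have hx := h.dotProduct_mulVec_nonneg (augment x)
  rw [augment_dotProduct_toMatrix_mulVec, Complex.zero_le_real] at hx
  exact nonneg_of_mul_nonneg_right hx two_pos

theorem posDef_of_toMatrix {P : Bimatrix k k} (h : P.toMatrix.PosDef) : P.PosDef := by
  refine ⟨(posSemidef_of_toMatrix h.posSemidef).1, (posSemidef_of_toMatrix h.posSemidef).2,
    fun x hx => ?_⟩
  have haug : augment x ≠ 0 := fun h0 => hx (funext fun i => congrFun h0 (.inl i))
  have hpos := h.dotProduct_mulVec_pos haug
  rw [augment_dotProduct_toMatrix_mulVec, Complex.zero_lt_real] at hpos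
  exact pos_of_mul_pos_right hpos two_pos.le

/-- Every `z` splits as `augment x + I • augment w`, with `x = (z₁ + z₂^#)/2` and
`w = (z₁ - z₂^#)/(2I)`. -/
theorem exists_eq_augment_add_I_smul_augment (z : Fin k ⊕ Fin k → ℂ) :
    ∃ x w : Fin k → ℂ, z = augment x + Complex.I • augment w := by
  refine ⟨fun i => (z (.inl i) + star (z (.inr i))) / 2,
    fun i => (z (.inl i) - star (z (.inr i))) / (2 * Complex.I), ?_⟩
  ext (i | i)
  · simp only [augment, Pi.add_apply, Pi.smul_apply, Sum.elim_inl, smul_eq_mul]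
    field_simp
    ring
  · simp only [augment, Pi.add_apply, Pi.smul_apply, Sum.elim_inr, Pi.star_apply, smul_eq_mul,
      star_div₀, star_add, star_sub, star_mul', Complex.star_def, Complex.conj_I, Complex.conj_conj,
      map_ofNat]
    field_simp
    ring

theorem PosSemidef.toMatrix {P : Bimatrix k k} (h : P.PosSemidef) : P.toMatrix.PosSemidef := by
  have hH := (isHermitian_iff_toMatrix P).mp h.1
  refine .of_dotProduct_mulVec_nonneg hH fun z => ?_
  obtain ⟨x, w, rfl⟩ := exists_eq_augment_add_I_smul_augment z
  set e := fun u v => star (augment u) ⬝ᵥ (P.toMatrix *ᵥ augment v) with he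
  -- the cross terms cancel since `e x w` is real and `e w x` is its conjugate
  have hcross : e w x = e x w :=
    calc e w x = star (e x w) := by
          rw [he, ← star_dotProduct, star_mulVec, ← dotProduct_mulVec, hH.eq]
      _ = e x w := by
          simp only [he, augment_dotProduct_toMatrix_mulVec, Complex.star_def, Complex.conj_ofReal]
  have hexpand : star (augment x + Complex.I • augment w) ⬝ᵥ
      (P.toMatrix *ᵥ (augment x + Complex.I • augment w))
        = e x x + e w w + Complex.I * (e x w - e w x) := by
    simp only [he, star_add, star_smul, mulVec_add, mulVec_smul, add_dotProduct, dotProduct_add,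
      smul_dotProduct, dotProduct_smul, smul_eq_mul, Complex.star_def, Complex.conj_I]
    linear_combination (-(star (augment w) ⬝ᵥ (P.toMatrix *ᵥ augment w))) * Complex.I_sq
  rw [hexpand, hcross, sub_self, mul_zero, add_zero, he]
  simp only [augment_dotProduct_toMatrix_mulVec]
  exact_mod_cast add_nonneg (mul_nonneg zero_le_two (h.2 x)) (mul_nonneg zero_le_two (h.2 w))

theorem posDef_toMatrix_mk_zero {R : Matrix (Fin k) (Fin k) ℂ} (hR : R.PosDef) :
    (Bimatrix.mk R 0).toMatrix.PosDef := by
  have hR' : (mconj R).PosDef := hR.1.mconj_eq ▸ hR.transpose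
  have := hR.isUnit.invertible
  have hpsd : (fromBlocks R 0 0 (mconj R)).PosSemidef := by
    simpa using (PosDef.fromBlocks₁₁ 0 (mconj R) hR).mpr (by simpa using hR'.posSemidef)
  rw [toMatrix, mconj_zero]
  exact hpsd.posDef_iff_isUnit.mpr (isUnit_fromBlocks_zero₂₁.mpr ⟨hR.isUnit, hR'.isUnit⟩)

theorem le_of_toMatrix_le {X Y : Bimatrix k k} (h : X.toMatrix ≤ Y.toMatrix) : X.le Y :=
  posSemidef_of_toMatrix (by rw [toMatrix_sub]; exact h)

end Bimatrix

open Bimatrix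

theorem toMatrix_Smat (B : Bimatrix n m) (R : Matrix (Fin m) (Fin m) ℂ) (P : Bimatrix n n) :
    (Smat B R P).toMatrix = (Bimatrix.mk R 0).toMatrix + B.toMatrixᴴ * P.toMatrix * B.toMatrix := by
  rw [Smat, toMatrix_add, toMatrix_mul, toMatrix_mul, toMatrix_conjT, Matrix.mul_assoc]

theorem toMatrix_riccatiIter_succ (A : Bimatrix n n) (B : Bimatrix n m)
    (Q : Matrix (Fin n) (Fin n) ℂ) (R : Matrix (Fin m) (Fin m) ℂ) (k : ℕ) :
    (riccatiIter A B Q R (k + 1)).toMatrix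
      = riccatiMap A.toMatrix B.toMatrix (Bimatrix.mk Q 0).toMatrix (Bimatrix.mk R 0).toMatrix
          (riccatiIter A B Q R k).toMatrix := by
  rw [riccatiIter]
  simp only [toMatrix_sub, toMatrix_add, toMatrix_mul, toMatrix_conjT, toMatrix_inv, toMatrix_Smat,
    riccatiMap, Matrix.mul_assoc]

theorem RiccatiEq.isFixedPt_riccatiMap {A : Bimatrix n n} {B : Bimatrix n m}
    {Q : Matrix (Fin n) (Fin n) ℂ} {R : Matrix (Fin m) (Fin m) ℂ} {P : Bimatrix n n}
    (h : RiccatiEq A B Q R P) :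
    (riccatiMap A.toMatrix B.toMatrix (Bimatrix.mk Q 0).toMatrix
      (Bimatrix.mk R 0).toMatrix).IsFixedPt P.toMatrix := by
  obtain ⟨T, hT, heq⟩ := h
  have hQ := congrArg toMatrix heq
  simp only [toMatrix_neg, toMatrix_sub, toMatrix_mul, toMatrix_conjT, hT.toMatrix_eq,
    toMatrix_Smat] at hQ
  rw [Function.IsFixedPt, riccatiMap, neg_eq_iff_eq_neg.mp hQ]
  simp only [Matrix.mul_assoc]
  abel

theorem riccatiIter_monotone_general
    (A : Bimatrix n n) (B : Bimatrix n m)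
    (Q : Matrix (Fin n) (Fin n) ℂ) (R : Matrix (Fin m) (Fin m) ℂ)
    (hQ : Q.PosDef) (hR : R.PosDef)
    (P : Bimatrix n n) (hP : P.PosDef ∧ RiccatiEq A B Q R P) :
    ∀ k : ℕ,
      ((Smat B R (riccatiIter A B Q R k)).PosDef ∧
        (Smat B R (riccatiIter A B Q R k)).IsInv (Smat B R (riccatiIter A B Q R k)).inv) ∧
      Bimatrix.le ⟨Q, 0⟩ (riccatiIter A B Q R k) ∧
      Bimatrix.le (riccatiIter A B Q R k) (riccatiIter A B Q R (k + 1)) ∧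
      Bimatrix.le (riccatiIter A B Q R (k + 1)) P := by
  set f := riccatiMap A.toMatrix B.toMatrix (Bimatrix.mk Q 0).toMatrix (Bimatrix.mk R 0).toMatrix
  have hR' := posDef_toMatrix_mk_zero hR
  have hQ' : 0 ≤ (Bimatrix.mk Q 0).toMatrix := (posDef_toMatrix_mk_zero hQ).posSemidef.nonneg
  have hf : MonotoneOn f (Set.Ici (Bimatrix.mk Q 0).toMatrix) := fun X hX _ _ hXY =>
    riccatiMap_mono _ _ _ hR' (hQ'.trans hX) hXY
  have hfix := hP.2.isFixedPt_riccatiMap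
  have hQP : (Bimatrix.mk Q 0).toMatrix ≤ P.toMatrix :=
    hfix.eq ▸ le_riccatiMap _ _ _ hR' hP.1.posSemidef.toMatrix.nonneg
  have hiter (k : ℕ) : (riccatiIter A B Q R k).toMatrix = f^[k] (Bimatrix.mk Q 0).toMatrix := by
    induction k with
    | zero => rfl
    | succ k ih => rw [toMatrix_riccatiIter_succ, ih, Function.iterate_succ_apply']
  have hbounds := hf.iterate_le_succ_and_mem_Icc (le_riccatiMap _ _ _ hR' hQ') hfix hQP
  simp only [← hiter] at hbounds
  intro k
  obtain ⟨⟨hQk, -⟩, hkk⟩ := hbounds k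
  obtain ⟨⟨-, hkP⟩, -⟩ := hbounds (k + 1)
  have hS : (Smat B R (riccatiIter A B Q R k)).toMatrix.PosDef := by
    rw [toMatrix_Smat]
    exact hR'.add_conjTranspose_mul_mul (hQ'.trans hQk) _
  exact ⟨⟨posDef_of_toMatrix hS, isInv_inv_of_isUnit hS.isUnit⟩, le_of_toMatrix_le hQk,
    le_of_toMatrix_le hkk, le_of_toMatrix_le hkP⟩

/-- If the system is stabilizable and `{P₁,P₂}` is the unique positive
definite solution of the bimatrix Riccati equation, then the iteration starting from
`{Q,0}` is well defined (each `{S₁(k),S₂(k)}` is positive definite, hence invertible)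
and is monotone: `{Q,0} ≤ {P(k)} ≤ {P(k+1)} ≤ {P₁,P₂}` for all `k`. -/
theorem riccatiIter_monotone
    (A : Bimatrix n n) (B : Bimatrix n m)
    (Q : Matrix (Fin n) (Fin n) ℂ) (R : Matrix (Fin m) (Fin m) ℂ)
    (hQ : Q.PosDef) (hR : R.PosDef)
    (hstab : Stabilizable A B)
    (P : Bimatrix n n) (hP : P.PosDef ∧ RiccatiEq A B Q R P)
    (huniq : ∀ P' : Bimatrix n n, P'.PosDef ∧ RiccatiEq A B Q R P' → P' = P) :
    ∀ k : ℕ,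
      ((Smat B R (riccatiIter A B Q R k)).PosDef ∧
        (Smat B R (riccatiIter A B Q R k)).IsInv (Smat B R (riccatiIter A B Q R k)).inv) ∧
      Bimatrix.le ⟨Q, 0⟩ (riccatiIter A B Q R k) ∧
      Bimatrix.le (riccatiIter A B Q R k) (riccatiIter A B Q R (k + 1)) ∧
      Bimatrix.le (riccatiIter A B Q R (k + 1)) P :=
  riccatiIter_monotone_general A B Q R hQ hR P hP
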